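/- Leading bias of the uncorrected estimator: let q > p > 1 be real and A_n^{(p,q)} = ζ(p)^{q/p} − D_n^{(p,q)}. Then A_n^{(p,q)} − ζ(q) = (q/p) ζ(p)^{q/p − 1} t_n^{(p)} + O(n^{-min(2p−2, q−1)}) as n → ∞, where t_n^{(p)} = ζ(p) − S_n^{(p)}. -/

import Mathlib

open Filter Finset

/-- Partial sum `S_n^{(p)} = ∑_{k=1}^n k^{-p}`. -/
noncomputable def S (p : ℝ) (n : ℕ) : ℝ := ∑ k ∈ Finset.range n, ((k : ℝ) + 1) ^ (-p)

/-- `ζ(s) = ∑_{k=1}^∞ k^{-s}` (as a tsum). -/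
noncomputable def zetaR (s : ℝ) : ℝ := ∑' k : ℕ, ((k : ℝ) + 1) ^ (-s)

/-- Finite deficiency `D_n^{(p,q)} = (S_n^{(p)})^{q/p} - T_n^{(q)}`. -/
noncomputable def D (p q : ℝ) (n : ℕ) : ℝ := (S p n) ^ (q / p) - S q n

/-!
With `r = q / p` and `t = ζ(p) - S_n^{(p)}`, the error term splits as
`(ζ(p)^r - (S_n^{(p)})^r - r ζ(p)^{r-1} t) - (ζ(q) - T_n^{(q)})`.
The first part is a second-order Taylor remainder of `x ↦ x^r` on `[S_n^{(p)}, ζ(p)] ⊆ [1, ∞)`,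
hence `O(t^2)` by two applications of the mean value theorem, and `t = O(n^{1-p})`;
the second part is the tail of the `q`-series, `O(n^{1-q})`. Both tails are bounded by
telescoping `(k+1)^{-s} ≤ (k^{1-s} - (k+1)^{1-s}) / (s - 1)`.
-/

lemma summable_rpow_neg_succ {s : ℝ} (hs : 1 < s) :
    Summable (fun k : ℕ => ((k : ℝ) + 1) ^ (-s)) :=
  ((summable_nat_add_iff 1).mpr (Real.summable_nat_rpow.mpr (by linarith : -s < -1))).congr
    fun k => by push_cast; rfl

lemma zetaR_sub_S {s : ℝ} (hs : 1 < s) (n : ℕ) :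
    zetaR s - S s n = ∑' k : ℕ, (((k + n : ℕ) : ℝ) + 1) ^ (-s) := by
  rw [zetaR, S, ← (summable_rpow_neg_succ hs).sum_add_tsum_nat_add n, add_sub_cancel_left]

lemma S_le_zetaR {s : ℝ} (hs : 1 < s) (n : ℕ) : S s n ≤ zetaR s :=
  (summable_rpow_neg_succ hs).sum_le_tsum _ fun _ _ => by positivity

lemma one_le_S (s : ℝ) {n : ℕ} (hn : 0 < n) : 1 ≤ S s n := by
  have := single_le_sum (f := fun k : ℕ => ((k : ℝ) + 1) ^ (-s))
    (fun _ _ => by positivity) (mem_range.mpr hn)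
  simpa [S] using this

lemma exists_rpow_sub_rpow_eq (t : ℝ) {a b : ℝ} (ha : 0 < a) (hab : a < b) :
    ∃ c ∈ Set.Ioo a b, b ^ t - a ^ t = t * c ^ (t - 1) * (b - a) := by
  have hcont : ContinuousOn (fun u : ℝ => u ^ t) (Set.Icc a b) :=
    continuousOn_id.rpow_const fun u hu => Or.inl (ha.trans_le hu.1).ne'
  obtain ⟨c, hc, hslope⟩ := exists_hasDerivAt_eq_slope _ _ hab hcont
    fun u hu => Real.hasDerivAt_rpow_const (Or.inl (ha.trans hu.1).ne')
  refine ⟨c, hc, ?_⟩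
  rw [hslope, div_mul_cancel₀ _ (sub_ne_zero.mpr hab.ne')]

lemma rpow_le_max_rpow_one (t : ℝ) {d b : ℝ} (hd : 1 ≤ d) (hdb : d ≤ b) :
    d ^ t ≤ max (b ^ t) 1 := by
  rcases le_total 0 t with ht | ht
  · exact le_max_of_le_left (Real.rpow_le_rpow (by linarith) hdb ht)
  · exact le_max_of_le_right (Real.rpow_le_one_of_one_le_of_nonpos hd ht)

lemma abs_rpow_sub_rpow_sub_mul_le (r : ℝ) {a b : ℝ} (ha : 1 ≤ a) (hab : a ≤ b) :
    |b ^ r - a ^ r - r * b ^ (r - 1) * (b - a)| ≤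
      |r * (r - 1)| * max (b ^ (r - 2)) 1 * (b - a) ^ 2 := by
  rcases hab.eq_or_lt with rfl | hab
  · simp
  obtain ⟨c, hc, hrc⟩ := exists_rpow_sub_rpow_eq r (by linarith) hab
  obtain ⟨d, hd, hrd⟩ := exists_rpow_sub_rpow_eq (r - 1) (by linarith [hc.1]) hc.2
  have hexpand : b ^ r - a ^ r - r * b ^ (r - 1) * (b - a) =
      -(r * (r - 1)) * (d ^ (r - 2) * ((b - c) * (b - a))) := by
    rw [hrc, show r - 2 = r - 1 - 1 by ring]
    linear_combination (-(r * (b - a))) * hrd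
  have hdb : d ^ (r - 2) ≤ max (b ^ (r - 2)) 1 :=
    rpow_le_max_rpow_one _ (by linarith [hc.1, hd.1]) hd.2.le
  have hcb : (b - c) * (b - a) ≤ (b - a) ^ 2 := by nlinarith [hc.1, hc.2]
  have hd0 : 0 < d := by linarith [hc.1, hd.1]
  have hbc : 0 ≤ b - c := by linarith [hc.2]
  have hba : 0 ≤ b - a := by linarith
  rw [hexpand, abs_mul, abs_neg, abs_of_nonneg (by positivity : 0 ≤ d ^ (r - 2) * ((b - c) * (b - a))),
    mul_assoc]
  exact mul_le_mul_of_nonneg_left (mul_le_mul hdb hcb (by positivity) (by positivity)) (abs_nonneg _)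

lemma rpow_neg_add_one_le {s x : ℝ} (hs : 1 < s) (hx : 0 < x) :
    (x + 1) ^ (-s) ≤ (x ^ (1 - s) - (x + 1) ^ (1 - s)) / (s - 1) := by
  obtain ⟨c, hc, hrc⟩ := exists_rpow_sub_rpow_eq (1 - s) hx (lt_add_one x)
  have hcx : (x + 1) ^ (-s) ≤ c ^ (-s) :=
    Real.rpow_le_rpow_of_nonpos (hx.trans hc.1) hc.2.le (by linarith)
  rw [show 1 - s - 1 = -s by ring, add_sub_cancel_left, mul_one] at hrc
  rw [le_div_iff₀ (by linarith)]
  nlinarith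

lemma zetaR_sub_S_le {s : ℝ} (hs : 1 < s) {n : ℕ} (hn : 0 < n) :
    zetaR s - S s n ≤ (n : ℝ) ^ (1 - s) / (s - 1) := by
  rw [zetaR_sub_S hs n]
  refine Real.tsum_le_of_sum_range_le (fun _ => by positivity) fun m => ?_
  have hn0 : (0 : ℝ) < n := by exact_mod_cast hn
  have hs1 : 0 < s - 1 := by linarith
  calc ∑ k ∈ range m, (((k + n : ℕ) : ℝ) + 1) ^ (-s)
      ≤ ∑ k ∈ range m, (((k : ℝ) + n) ^ (1 - s) - (((k + 1 : ℕ) : ℝ) + n) ^ (1 - s)) / (s - 1) := by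
        gcongr with k
        push_cast
        rw [add_right_comm (k : ℝ) 1]
        exact rpow_neg_add_one_le hs (by positivity)
    _ = ((n : ℝ) ^ (1 - s) - ((m : ℝ) + n) ^ (1 - s)) / (s - 1) := by
        rw [← sum_div, sum_range_sub' (fun k : ℕ => ((k : ℝ) + n) ^ (1 - s))]
        simp
    _ ≤ (n : ℝ) ^ (1 - s) / (s - 1) := by
        gcongr
        exact sub_le_self _ (by positivity)

lemma sq_zetaR_sub_S_le {s : ℝ} (hs : 1 < s) {n : ℕ} (hn : 0 < n) :
    (zetaR s - S s n) ^ 2 ≤ (n : ℝ) ^ (2 - 2 * s) / (s - 1) ^ 2 := by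
  have hn0 : (0 : ℝ) < n := by exact_mod_cast hn
  calc (zetaR s - S s n) ^ 2 ≤ ((n : ℝ) ^ (1 - s) / (s - 1)) ^ 2 :=
        pow_le_pow_left₀ (sub_nonneg.2 (S_le_zetaR hs n)) (zetaR_sub_S_le hs hn) 2
    _ = (n : ℝ) ^ (2 - 2 * s) / (s - 1) ^ 2 := by
        rw [div_pow, ← Real.rpow_natCast, ← Real.rpow_mul hn0.le]
        ring_nf

theorem stmt12 (p q : ℝ) (hp : 1 < p) (hpq : p < q) :
    ∃ C > (0 : ℝ), ∃ N : ℕ, ∀ n ≥ N,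
      |(zetaR p ^ (q / p) - D p q n) - zetaR q -
        (q / p) * zetaR p ^ (q / p - 1) * (zetaR p - S p n)| ≤
        C * (n : ℝ) ^ (-(min (2 * p - 2) (q - 1))) := by
  have hq : 1 < q := hp.trans hpq
  simp only [D]
  set r := q / p
  set K := |r * (r - 1)| * max (zetaR p ^ (r - 2)) 1
  set m := min (2 * p - 2) (q - 1)
  refine ⟨K / (p - 1) ^ 2 + 1 / (q - 1), by positivity, 1, fun n hn => ?_⟩
  have hn1 : (1 : ℝ) ≤ n := by exact_mod_cast hn
  have hTaylor := abs_rpow_sub_rpow_sub_mul_le r (one_le_S p hn) (S_le_zetaR hp n)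
  have hp_exp : (n : ℝ) ^ (2 - 2 * p) ≤ (n : ℝ) ^ (-m) :=
    Real.rpow_le_rpow_of_exponent_le hn1 (by linarith [min_le_left (2 * p - 2) (q - 1)])
  have hq_exp : (n : ℝ) ^ (1 - q) ≤ (n : ℝ) ^ (-m) :=
    Real.rpow_le_rpow_of_exponent_le hn1 (by linarith [min_le_right (2 * p - 2) (q - 1)])
  calc _ = |(zetaR p ^ r - S p n ^ r - r * zetaR p ^ (r - 1) * (zetaR p - S p n))
          - (zetaR q - S q n)| := by ring_nf
    _ ≤ |zetaR p ^ r - S p n ^ r - r * zetaR p ^ (r - 1) * (zetaR p - S p n)|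
          + |zetaR q - S q n| := abs_sub _ _
    _ ≤ K * ((n : ℝ) ^ (2 - 2 * p) / (p - 1) ^ 2) + (n : ℝ) ^ (1 - q) / (q - 1) := by
        rw [abs_of_nonneg (sub_nonneg.2 (S_le_zetaR hq n))]
        gcongr
        · exact hTaylor.trans (by gcongr; exact sq_zetaR_sub_S_le hp hn)
        · exact zetaR_sub_S_le hq hn
    _ = K / (p - 1) ^ 2 * (n : ℝ) ^ (2 - 2 * p) + 1 / (q - 1) * (n : ℝ) ^ (1 - q) := by ring
    _ ≤ (K / (p - 1) ^ 2 + 1 / (q - 1)) * (n : ℝ) ^ (-m) := by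
        rw [add_mul]
        gcongr
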